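/- Second Noether theorem for the difference calculus (n = 1, r = 1, m = 0): Let a < b be integers with b − a ≥ 2, L : ℤ × ℝ × ℝ → ℝ with L(t,·,·) C¹ for each t, and g : ℤ → ℝ. Suppose that for all y, p : ℤ → ℝ, ∑_{t=a}^{b-1} L(t, y(t+1) + g(t+1)p(t+1), Δ(y + g·p)(t)) = ∑_{t=a}^{b-1} L(t, y(t+1), Δy(t)). Then for every y : ℤ → ℝ, g(t+1)·( ∂L/∂u(t, y(t+1), Δy(t)) − Δ[∂L/∂v(·, y(·+1), Δy(·))](t) ) = 0 for all integers t with a ≤ t ≤ b − 2. -/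

import Mathlib

/-!
Perturb `y` at the single point `t + 1` by `g (t + 1) * ε`. Only the summands at `t` and `t + 1`
of the action see `y (t + 1)`, through `Φ x = L t x (x - y t) + L (t + 1) (y (t + 2)) (y (t + 2) - x)`,
so invariance says that `Φ` is constant along the direction `g (t + 1)` at `y (t + 1)`. Differentiating
at `ε = 0` gives `g (t + 1) * Φ' (y (t + 1)) = 0`, and by the chain rule `Φ' (y (t + 1))` is the
discrete Euler–Lagrange expression at `t`.
-/

theorem DifferentiableAt.hasDerivAt_uncurry_comp {f : ℝ → ℝ → ℝ} {u v : ℝ → ℝ} {u' v' s : ℝ}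
    (hf : DifferentiableAt ℝ (Function.uncurry f) (u s, v s))
    (hu : HasDerivAt u u' s) (hv : HasDerivAt v v' s) :
    HasDerivAt (fun r => f (u r) (v r))
      (u' * deriv (fun x => f x (v s)) (u s) + v' * deriv (fun w => f (u s) w) (v s)) s := by
  set D := fderiv ℝ (Function.uncurry f) (u s, v s)
  have hD : HasFDerivAt (Function.uncurry f) D (u s, v s) := hf.hasFDerivAt
  have h₁ : HasDerivAt (fun x => f x (v s)) (D (1, 0)) (u s) :=
    (hD.comp_hasDerivAt (u s) ((hasDerivAt_id' (u s)).prodMk (hasDerivAt_const (u s) (v s))) :)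
  have h₂ : HasDerivAt (fun w => f (u s) w) (D (0, 1)) (v s) :=
    (hD.comp_hasDerivAt (v s) ((hasDerivAt_const (v s) (u s)).prodMk (hasDerivAt_id' (v s))) :)
  have hsplit : D (u', v') = u' * D (1, 0) + v' * D (0, 1) := by
    have : ((u', v') : ℝ × ℝ) = u' • ((1, 0) : ℝ × ℝ) + v' • ((0, 1) : ℝ × ℝ) := by simp
    rw [this, map_add, map_smul, map_smul, smul_eq_mul, smul_eq_mul]
  rw [h₁.deriv, h₂.deriv, ← hsplit]
  exact hD.comp_hasDerivAt s (hu.prodMk hv)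

theorem HasDerivAt.mul_eq_zero_of_forall_add_mul_eq {Φ : ℝ → ℝ} {Φ' x c : ℝ}
    (hΦ : HasDerivAt Φ Φ' x) (hconst : ∀ ε, Φ (x + c * ε) = Φ x) : c * Φ' = 0 := by
  have hline : HasDerivAt (fun ε => x + c * ε) c 0 := by
    simpa using ((hasDerivAt_id (0 : ℝ)).const_mul c).const_add x
  have hcomp : HasDerivAt (fun ε => Φ (x + c * ε)) (Φ' * c) 0 :=
    hΦ.comp_of_eq 0 hline (by simp)
  rw [funext hconst] at hcomp
  rw [mul_comm]
  exact hcomp.unique (hasDerivAt_const 0 (Φ x))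

noncomputable def discreteAction (L : ℤ → ℝ → ℝ → ℝ) (a b : ℤ) (y : ℤ → ℝ) : ℝ :=
  ∑ t ∈ Finset.Ico a b, L t (y (t + 1)) (y (t + 1) - y t)

theorem discreteAction_sub_of_eq_of_ne {L : ℤ → ℝ → ℝ → ℝ} {a b t : ℤ} {y y' : ℤ → ℝ}
    (hy : ∀ s, s ≠ t + 1 → y' s = y s) (hat : a ≤ t) (htb : t + 2 ≤ b) :
    discreteAction L a b y' - discreteAction L a b y =
      (L t (y' (t + 1)) (y' (t + 1) - y t) + L (t + 1) (y (t + 2)) (y (t + 2) - y' (t + 1))) -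
        (L t (y (t + 1)) (y (t + 1) - y t) + L (t + 1) (y (t + 2)) (y (t + 2) - y (t + 1))) := by
  unfold discreteAction
  rw [← Finset.sum_sub_distrib, Finset.sum_eq_add_of_mem t (t + 1) (by simp; omega)
    (by simp; omega) (by omega)]
  · rw [hy t (by omega), show t + 1 + 1 = t + 2 by ring, hy (t + 2) (by omega)]
    ring
  · rintro s - ⟨hst, hst₁⟩
    rw [hy s hst₁, hy (s + 1) (by omega), sub_self]

theorem discrete_second_noether_m0_general (a b : ℤ)
    (L : ℤ → ℝ → ℝ → ℝ)
    (hL : ∀ t : ℤ, ContDiff ℝ 1 (fun p : ℝ × ℝ => L t p.1 p.2))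
    (g : ℤ → ℝ)
    (hinv : ∀ y p : ℤ → ℝ,
      ∑ t ∈ Finset.Ico a b, L t (y (t + 1) + g (t + 1) * p (t + 1))
          ((y (t + 1) + g (t + 1) * p (t + 1)) - (y t + g t * p t)) =
        ∑ t ∈ Finset.Ico a b, L t (y (t + 1)) (y (t + 1) - y t)) :
    ∀ y : ℤ → ℝ, ∀ t : ℤ, a ≤ t → t ≤ b - 2 →
      g (t + 1) * (deriv (fun u => L t u (y (t + 1) - y t)) (y (t + 1)) -
        (deriv (fun v => L (t + 1) (y (t + 2)) v) (y (t + 2) - y (t + 1)) -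
          deriv (fun v => L t (y (t + 1)) v) (y (t + 1) - y t))) = 0 := by
  intro y t hat htb
  set Φ : ℝ → ℝ := fun x => L t x (x - y t) + L (t + 1) (y (t + 2)) (y (t + 2) - x)
  have hconst : ∀ ε, Φ (y (t + 1) + g (t + 1) * ε) = Φ (y (t + 1)) := by
    intro ε
    have hinv' : discreteAction L a b (y + g * Pi.single (t + 1) ε) = discreteAction L a b y :=
      hinv y (Pi.single (t + 1) ε)
    have hvar := discreteAction_sub_of_eq_of_ne (L := L) (y := y)
      (y' := y + g * Pi.single (t + 1) ε) (fun s hs => by simp [Pi.single_eq_of_ne hs]) hat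
      (by omega : t + 2 ≤ b)
    rw [hinv', sub_self] at hvar
    simp only [Pi.add_apply, Pi.mul_apply, Pi.single_eq_same] at hvar
    exact sub_eq_zero.mp hvar.symm
  have hΦ : HasDerivAt Φ
      (deriv (fun u => L t u (y (t + 1) - y t)) (y (t + 1)) +
        deriv (fun v => L t (y (t + 1)) v) (y (t + 1) - y t) -
        deriv (fun v => L (t + 1) (y (t + 2)) v) (y (t + 2) - y (t + 1))) (y (t + 1)) := by
    have h₀ := ((hL t).differentiable one_ne_zero _).hasDerivAt_uncurry_comp
      (hasDerivAt_id' (y (t + 1))) ((hasDerivAt_id' _).sub_const (y t))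
    have h₁ := ((hL (t + 1)).differentiable one_ne_zero _).hasDerivAt_uncurry_comp
      (hasDerivAt_const (y (t + 1)) (y (t + 2))) ((hasDerivAt_id' _).const_sub (y (t + 2)))
    refine (h₀.add h₁).congr_deriv ?_
    ring
  linear_combination hΦ.mul_eq_zero_of_forall_add_mul_eq hconst

theorem discrete_second_noether_m0 (a b : ℤ) (hab : a + 2 ≤ b)
    (L : ℤ → ℝ → ℝ → ℝ)
    (hL : ∀ t : ℤ, ContDiff ℝ 1 (fun p : ℝ × ℝ => L t p.1 p.2))
    (g : ℤ → ℝ)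
    (hinv : ∀ y p : ℤ → ℝ,
      ∑ t ∈ Finset.Ico a b, L t (y (t + 1) + g (t + 1) * p (t + 1))
          ((y (t + 1) + g (t + 1) * p (t + 1)) - (y t + g t * p t)) =
        ∑ t ∈ Finset.Ico a b, L t (y (t + 1)) (y (t + 1) - y t)) :
    ∀ y : ℤ → ℝ, ∀ t : ℤ, a ≤ t → t ≤ b - 2 →
      g (t + 1) * (deriv (fun u => L t u (y (t + 1) - y t)) (y (t + 1)) -
        (deriv (fun v => L (t + 1) (y (t + 2)) v) (y (t + 2) - y (t + 1)) -
          deriv (fun v => L t (y (t + 1)) v) (y (t + 1) - y t))) = 0 :=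
  discrete_second_noether_m0_general a b L hL g hinv
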